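/- arXiv:2101.11269 — 11 statements merged into one kernel-verified Lean document; each statement's English description precedes it below -/
import Mathlib

section
/- For all real numbers x, y > 0 with x + y < 1, we have 1 + log(1 - x)/x + log(1 - y)/y > log(1 - (x + y))/(x + y). -/
open Real

lemma hasSum_aux (t : ℝ) (h0 : 0 < t) (h1 : t < 1) :
    HasSum (fun n : ℕ => t ^ (n + 1) / (n + 2)) (-Real.log (1 - t) / t - 1) := by
  have habs : |t| < 1 := by rw [abs_of_pos h0]; exact h1
  have H := (Real.hasSum_pow_div_log_of_abs_lt_one habs).div_const t
  have H' : HasSum (fun n : ℕ => t ^ n / (n + 1)) (-Real.log (1 - t) / t) := by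
    convert H using 2 with n
    · rfl
    rw [pow_succ]
    field_simp
  have := (hasSum_nat_add_iff' (f := fun n : ℕ => t ^ n / (n + 1)) 1).mpr H'
  simp only [Finset.range_one, Finset.sum_singleton, pow_zero] at this
  convert this using 2 with n
  · rfl
  · push_cast; ring_nf
  · norm_num

theorem log_ineq_split (x y : ℝ) (hx : 0 < x) (hy : 0 < y) (hxy : x + y < 1) :
    1 + Real.log (1 - x) / x + Real.log (1 - y) / y >
      Real.log (1 - (x + y)) / (x + y) := by
  have hs : 0 < x + y := by linarith
  have Hx := hasSum_aux x hx (by linarith)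
  have Hy := hasSum_aux y hy (by linarith)
  have Hs := hasSum_aux (x + y) hs hxy
  have key : (-Real.log (1 - x) / x - 1) + (-Real.log (1 - y) / y - 1)
      < -Real.log (1 - (x + y)) / (x + y) - 1 := by
    refine hasSum_lt (f := fun n : ℕ => x ^ (n + 1) / (n + 2) + y ^ (n + 1) / (n + 2))
      (i := 1) ?_ ?_ (Hx.add Hy) Hs
    · intro n
      have hp : x ^ (n + 1) + y ^ (n + 1) ≤ (x + y) ^ (n + 1) :=
        pow_add_pow_le hx.le hy.le (Nat.succ_ne_zero n)
      have hn : (0:ℝ) < (n : ℝ) + 2 := by positivity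
      simp only []
      rw [← add_div, div_le_div_iff₀ hn hn]
      nlinarith
    · rw [← add_div]
      gcongr
      ring_nf
      nlinarith [mul_pos hx hy]
  rw [neg_div, neg_div, neg_div] at key
  linarith
end

section
/- For all x in (0, 1), log(1 - x) < x(3x - 2) / (2(1 - x)^2). -/
lemma log_lt_quad (x : ℝ) (hx : x ∈ Set.Ioo (0 : ℝ) 1) :
    Real.log (1 - x) < -x - x ^ 2 / 2 := by
  obtain ⟨hx0, hx1⟩ := hx
  set f : ℝ → ℝ := fun y => -y - y ^ 2 / 2 - Real.log (1 - y) with hf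
  have key : ∀ y ∈ Set.Ioo (0 : ℝ) 1, HasDerivAt f (-1 - y + 1 / (1 - y)) y := by
    intro y hy
    have h1 : HasDerivAt (fun z : ℝ => 1 - z) (-1) y := by
      simpa using (hasDerivAt_id y).const_sub 1
    have hne : (1 : ℝ) - y ≠ 0 := by have := hy.2; intro h; linarith
    have h2 : HasDerivAt (fun z : ℝ => Real.log (1 - z)) (-1 / (1 - y)) y := h1.log hne
    have h3 : HasDerivAt (fun z : ℝ => -z - z ^ 2 / 2) (-1 - 2 * y ^ 1 / 2) y :=
      (hasDerivAt_id y).neg.sub ((hasDerivAt_pow 2 y).div_const 2)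
    have h5 := h3.sub h2
    have he : -1 - 2 * y ^ 1 / 2 - -1 / (1 - y) = -1 - y + 1 / (1 - y) := by
      ring
    rw [he] at h5
    exact h5
  have hmono : StrictMonoOn f (Set.Ico 0 1) := by
    apply strictMonoOn_of_deriv_pos (convex_Ico 0 1)
    · apply ContinuousOn.sub
      · fun_prop
      · apply ContinuousOn.log (by fun_prop)
        intro y hy
        have := hy.2
        intro hc; linarith
    · intro y hy
      rw [interior_Ico] at hy
      rw [(key y hy).deriv]
      have h1y : (0:ℝ) < 1 - y := by linarith [hy.2]
      have : -1 - y + 1 / (1 - y) = y ^ 2 / (1 - y) := by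
        field_simp; ring
      rw [this]
      exact div_pos (pow_pos hy.1 2) h1y
  have h0 : f 0 = 0 := by simp [hf]
  have := hmono (Set.mem_Ico.mpr ⟨le_refl 0, one_pos⟩)
      (Set.mem_Ico.mpr ⟨hx0.le, hx1⟩) hx0
  rw [h0] at this
  simp only [hf] at this
  linarith

theorem log_lt_key (x : ℝ) (hx : x ∈ Set.Ioo (0 : ℝ) 1) :
    Real.log (1 - x) < x * (3 * x - 2) / (2 * (1 - x) ^ 2) := by
  obtain ⟨hx0, hx1⟩ := hx
  have h1 : Real.log (1 - x) < -x - x ^ 2 / 2 := log_lt_quad x ⟨hx0, hx1⟩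
  have h1x : (0:ℝ) < 1 - x := by linarith
  have hden : (0:ℝ) < 2 * (1 - x) ^ 2 := by nlinarith
  have h2 : -x - x ^ 2 / 2 ≤ x * (3 * x - 2) / (2 * (1 - x) ^ 2) := by
    rw [le_div_iff₀ hden]
    nlinarith [pow_nonneg hx0.le 4, sq_nonneg x, sq_nonneg (1 - x)]
  linarith
end

section
/- The function h(x) = log(1 - x)/x^2 + 1/(x(1 - x)) is strictly increasing on the interval (0, 1). -/
open Real Set

lemma f_hasDeriv (y : ℝ) (hy0 : 0 < y) (hy1 : y < 1) :
    HasDerivAt (fun x : ℝ => -Real.log (1 - x) - x * (2 - 3 * x) / (2 * (1 - x) ^ 2))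
      (y ^ 2 / (1 - y) ^ 3) y := by
  have h1 : (1 : ℝ) - y ≠ 0 := by linarith
  have hlog : HasDerivAt (fun x : ℝ => Real.log (1 - x)) (-(1 / (1 - y))) y := by
    have := (Real.hasDerivAt_log h1).comp y
      ((hasDerivAt_const y (1 : ℝ)).sub (hasDerivAt_id y))
    simpa [Function.comp_def] using this
  have hnum : HasDerivAt (fun x : ℝ => x * (2 - 3 * x)) (1 * (2 - 3 * y) + y * (0 - (0 * y + 3 * 1))) y :=
    (hasDerivAt_id y).mul (((hasDerivAt_const y (2 : ℝ)).sub
      ((hasDerivAt_const y (3 : ℝ)).mul (hasDerivAt_id y))))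
  have hden : HasDerivAt (fun x : ℝ => 2 * (1 - x) ^ 2)
      (2 * ((2 : ℕ) * (1 - y) ^ 1 * (0 - 1))) y := by
    exact (((hasDerivAt_const y (1 : ℝ)).sub (hasDerivAt_id y)).pow 2).const_mul 2
  have hden' : (2 : ℝ) * (1 - y) ^ 2 ≠ 0 := by positivity
  have := hlog.neg.sub (hnum.div hden hden')
  refine this.congr_deriv ?_
  field_simp
  ring

lemma key (x : ℝ) (hx0 : 0 < x) (hx1 : x < 1) :
    0 < -Real.log (1 - x) - x * (2 - 3 * x) / (2 * (1 - x) ^ 2) := by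
  set f : ℝ → ℝ := fun x => -Real.log (1 - x) - x * (2 - 3 * x) / (2 * (1 - x) ^ 2) with hf
  have hmono : StrictMonoOn f (Set.Ico (0 : ℝ) 1) := by
    apply strictMonoOn_of_deriv_pos (convex_Ico 0 1)
    · apply ContinuousOn.sub
      · apply ContinuousOn.neg
        apply Real.continuousOn_log.comp (by fun_prop)
        intro y hy
        simp only [Set.mem_Ico] at hy
        simp only [Set.mem_compl_iff, Set.mem_singleton_iff]
        intro h
        linarith [hy.2]
      · apply ContinuousOn.div (by fun_prop) (by fun_prop)
        intro y hy
        simp only [Set.mem_Ico] at hy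
        have : (1 : ℝ) - y ≠ 0 := by linarith [hy.2]
        positivity
    · intro y hy
      rw [interior_Ico] at hy
      obtain ⟨hy0, hy1⟩ := hy
      rw [(f_hasDeriv y hy0 hy1).deriv]
      have : (0:ℝ) < 1 - y := by linarith
      positivity
  have h0 : f 0 = 0 := by simp [hf]
  have := hmono ⟨le_refl 0, one_pos⟩ ⟨hx0.le, hx1⟩ hx0
  rw [h0] at this
  exact this

lemma h_hasDeriv (x : ℝ) (hx0 : 0 < x) (hx1 : x < 1) :
    HasDerivAt (fun x : ℝ => Real.log (1 - x) / x ^ 2 + 1 / (x * (1 - x)))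
      (-2 * Real.log (1 - x) / x ^ 3 - (2 - 3 * x) / (x ^ 2 * (1 - x) ^ 2)) x := by
  have h1 : (1 : ℝ) - x ≠ 0 := by linarith
  have h2 : x ≠ 0 := ne_of_gt hx0
  have hlog : HasDerivAt (fun x : ℝ => Real.log (1 - x)) (-(1 / (1 - x))) x := by
    have := (Real.hasDerivAt_log h1).comp x
      ((hasDerivAt_const x (1 : ℝ)).sub (hasDerivAt_id x))
    simpa [Function.comp_def] using this
  have hpow : HasDerivAt (fun x : ℝ => x ^ 2) ((2 : ℕ) * x ^ 1) x := hasDerivAt_pow 2 x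
  have hden : HasDerivAt (fun x : ℝ => x * (1 - x)) (1 * (1 - x) + x * (0 - 1)) x :=
    (hasDerivAt_id x).mul ((hasDerivAt_const x (1 : ℝ)).sub (hasDerivAt_id x))
  have hden' : x * (1 - x) ≠ 0 := mul_ne_zero h2 h1
  have := (hlog.div hpow (pow_ne_zero 2 h2)).add ((hasDerivAt_const x (1 : ℝ)).div hden hden')
  refine this.congr_deriv ?_
  field_simp
  ring

theorem h_strictMonoOn :
    StrictMonoOn (fun x : ℝ => Real.log (1 - x) / x ^ 2 + 1 / (x * (1 - x)))
      (Set.Ioo (0 : ℝ) 1) := by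
  apply strictMonoOn_of_deriv_pos (convex_Ioo 0 1)
  · apply ContinuousOn.add
    · apply ContinuousOn.div
      · apply Real.continuousOn_log.comp (by fun_prop)
        intro y hy
        simp only [Set.mem_Ioo] at hy
        simp only [Set.mem_compl_iff, Set.mem_singleton_iff]
        intro h
        linarith [hy.2]
      · fun_prop
      · intro y hy
        simp only [Set.mem_Ioo] at hy
        have h2 : (0:ℝ) < y := hy.1
        positivity
    · apply ContinuousOn.div (by fun_prop) (by fun_prop)
      intro y hy
      simp only [Set.mem_Ioo] at hy
      have h1 : (0:ℝ) < 1 - y := by linarith [hy.2]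
      have h2 : (0:ℝ) < y := hy.1
      positivity
  · intro x hx
    rw [interior_Ioo] at hx
    obtain ⟨hx0, hx1⟩ := hx
    rw [(h_hasDeriv x hx0 hx1).deriv]
    have hk := key x hx0 hx1
    have h1 : (0:ℝ) < 1 - x := by linarith
    have heq : -2 * Real.log (1 - x) / x ^ 3 - (2 - 3 * x) / (x ^ 2 * (1 - x) ^ 2)
        = 2 * (-Real.log (1 - x) - x * (2 - 3 * x) / (2 * (1 - x) ^ 2)) / x ^ 3 := by
      field_simp
    rw [heq]
    positivity
end

section
/- Let (P^{(n)}) be a sequence of probability distributions on ℕ and (k_n) a sequence of positive integers such that k_n^2 · sup_i p_i^{(n)} → 0 as n → ∞. Let v_{k_n}^{(n)} denote the number of i.i.d. samples from P^{(n)} needed until k_n distinct elements are observed. Then v_{k_n}^{(n)} / k_n → 1 in probability as n → ∞. -/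
open MeasureTheory ProbabilityTheory
open scoped ENNReal

/-- The number of samplings (from the sequence of draws `X 0, X 1, ...`) needed until
`k` distinct elements have been observed (`sInf ∅ = 0` if this never happens). -/
noncomputable def greedyTime {Ω α : Type*} [DecidableEq α] (X : ℕ → Ω → α) (k : ℕ)
    (ω : Ω) : ℕ :=
  sInf {m | ((Finset.range m).image fun j => X j ω).card = k}

lemma exists_card_image_eq {α : Type*} [DecidableEq α] (f : ℕ → α) (k M : ℕ)
    (h : k ≤ ((Finset.range M).image f).card) :
    ∃ m ≤ M, ((Finset.range m).image f).card = k := by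
  induction M with
  | zero =>
      simp only [Finset.range_zero, Finset.image_empty, Finset.card_empty, Nat.le_zero] at h
      exact ⟨0, le_rfl, by simp [h]⟩
  | succ M ih =>
      by_cases h' : k ≤ ((Finset.range M).image f).card
      · obtain ⟨m, hm, hc⟩ := ih h'
        exact ⟨m, hm.trans (Nat.le_succ M), hc⟩
      · push_neg at h'
        have hstep : ((Finset.range (M+1)).image f).card ≤ ((Finset.range M).image f).card + 1 := by
          rw [Finset.range_add_one, Finset.image_insert]
          exact Finset.card_insert_le _ _
        have : ((Finset.range (M+1)).image f).card = k := le_antisymm (by omega) h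
        exact ⟨M+1, le_rfl, this⟩

lemma greedyTime_bounds {Ω α : Type*} [DecidableEq α] (X : ℕ → Ω → α) (k : ℕ) (ω : Ω) (M : ℕ)
    (h : k ≤ ((Finset.range M).image fun j => X j ω).card) :
    k ≤ greedyTime X k ω ∧ greedyTime X k ω ≤ M := by
  obtain ⟨m, hmM, hm⟩ := exists_card_image_eq (fun j => X j ω) k M h
  have hmem : greedyTime X k ω ∈
      {m | ((Finset.range m).image fun j => X j ω).card = k} :=
    Nat.sInf_mem ⟨m, hm⟩
  refine ⟨?_, le_trans (Nat.sInf_le hm) hmM⟩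
  calc k = ((Finset.range (greedyTime X k ω)).image fun j => X j ω).card := hmem.symm
    _ ≤ (Finset.range (greedyTime X k ω)).card := Finset.card_image_le
    _ = greedyTime X k ω := Finset.card_range _

theorem greedyTime_div_tendsto_one
    (Ω : ℕ → Type*) [∀ n, MeasurableSpace (Ω n)]
    (μ : ∀ n, Measure (Ω n)) [∀ n, IsProbabilityMeasure (μ n)]
    (X : ∀ n, ℕ → Ω n → ℕ) (p : ℕ → ℕ → ℝ) (k : ℕ → ℕ)
    (hk : ∀ n, 1 ≤ k n)
    (hp_nonneg : ∀ n i, 0 ≤ p n i) (hp_sum : ∀ n, HasSum (p n) 1)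
    (hmeas : ∀ n j, Measurable (X n j))
    (hindep : ∀ n, iIndepFun (X n) (μ n))
    (hdist : ∀ n j i, μ n (X n j ⁻¹' {i}) = ENNReal.ofReal (p n i))
    (hcond : Filter.Tendsto (fun n => (k n : ℝ) ^ 2 * ⨆ i, p n i) Filter.atTop (nhds 0)) :
    ∀ ε : ℝ, 0 < ε →
      Filter.Tendsto
        (fun n => μ n {ω | ε < |(greedyTime (X n) (k n) ω : ℝ) / (k n : ℝ) - 1|})
        Filter.atTop (nhds 0) := by
  intro ε hε
  have key : ∀ n, μ n {ω | ε < |(greedyTime (X n) (k n) ω : ℝ) / (k n : ℝ) - 1|}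
      ≤ ENNReal.ofReal ((1+ε)^2 * ((k n : ℝ)^2 * ⨆ i, p n i)) := by
    intro n
    set M : ℕ := ⌊(1+ε) * (k n : ℝ)⌋₊ with hMdef
    have hkpos : (0:ℝ) < (k n : ℝ) := by exact_mod_cast hk n
    have hkM : k n ≤ M := Nat.le_floor (by nlinarith)
    have hMle : (M : ℝ) ≤ (1+ε) * (k n : ℝ) := Nat.floor_le (by positivity)
    -- bddAbove and sum facts
    have hple1 : ∀ t, p n t ≤ 1 := fun t =>
      le_hasSum (hp_sum n) t (fun j _ => hp_nonneg n j)
    have hbdd : BddAbove (Set.range (p n)) := ⟨1, by rintro x ⟨t, rfl⟩; exact hple1 t⟩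
    have hSnonneg : 0 ≤ ⨆ t, p n t := le_trans (hp_nonneg n 0) (le_ciSup hbdd 0)
    have hsum1 : ∑' t, ENNReal.ofReal (p n t) = 1 := by
      rw [← ENNReal.ofReal_tsum_of_nonneg (hp_nonneg n) (hp_sum n).summable,
        (hp_sum n).tsum_eq, ENNReal.ofReal_one]
    -- pairwise collision bound
    have pair : ∀ i j : ℕ, i ≠ j →
        μ n {ω | X n i ω = X n j ω} ≤ ENNReal.ofReal (⨆ t, p n t) := by
      intro i j hij
      have hind : IndepFun (X n i) (X n j) (μ n) := (hindep n).indepFun hij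
      have hsub : {ω | X n i ω = X n j ω} ⊆
          ⋃ t : ℕ, (X n i ⁻¹' {t} ∩ X n j ⁻¹' {t}) := by
        intro ω h
        exact Set.mem_iUnion.2 ⟨X n j ω, ⟨h, rfl⟩⟩
      calc μ n {ω | X n i ω = X n j ω}
          ≤ ∑' t, μ n (X n i ⁻¹' {t} ∩ X n j ⁻¹' {t}) :=
            (measure_mono hsub).trans (measure_iUnion_le _)
        _ = ∑' t, ENNReal.ofReal (p n t) * ENNReal.ofReal (p n t) := by
            refine tsum_congr fun t => ?_
            rw [hind.measure_inter_preimage_eq_mul {t} {t} (measurableSet_singleton t)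
              (measurableSet_singleton t), hdist, hdist]
        _ ≤ ∑' t, ENNReal.ofReal (p n t) * ENNReal.ofReal (⨆ s, p n s) := by
            gcongr with t
            exact le_ciSup hbdd t
        _ = 1 * ENNReal.ofReal (⨆ s, p n s) := by rw [ENNReal.tsum_mul_right, hsum1]
        _ = _ := one_mul _
    -- the bad event is contained in the low-cardinality event
    have sub1 : {ω | ε < |(greedyTime (X n) (k n) ω : ℝ) / (k n : ℝ) - 1|} ⊆
        {ω | ((Finset.range M).image fun j => X n j ω).card < k n} := by
      intro ω hω
      by_contra hcard
      simp only [Set.mem_setOf_eq, not_lt] at hcard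
      obtain ⟨h1, h2⟩ := greedyTime_bounds (X n) (k n) ω M hcard
      have h1' : (k n : ℝ) ≤ (greedyTime (X n) (k n) ω : ℝ) := by exact_mod_cast h1
      have h2' : (greedyTime (X n) (k n) ω : ℝ) ≤ (1+ε) * (k n : ℝ) :=
        le_trans (by exact_mod_cast h2) hMle
      have habs : |(greedyTime (X n) (k n) ω : ℝ) / (k n : ℝ) - 1| ≤ ε := by
        rw [abs_of_nonneg (by rw [sub_nonneg]; exact (one_le_div hkpos).2 h1')]
        rw [sub_le_iff_le_add, div_le_iff₀ hkpos]
        nlinarith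
      exact absurd hω (not_lt.2 habs)
    -- low cardinality implies a collision
    have sub2 : {ω | ((Finset.range M).image fun j => X n j ω).card < k n} ⊆
        ⋃ i ∈ Finset.range M, ⋃ j ∈ Finset.range M,
          {ω | i ≠ j ∧ X n i ω = X n j ω} := by
      intro ω hω
      have hlt : ((Finset.range M).image fun j => X n j ω).card < (Finset.range M).card := by
        rw [Finset.card_range]; exact lt_of_lt_of_le hω hkM
      obtain ⟨i, hi, j, hj, hij, hfeq⟩ :=
        Finset.exists_ne_map_eq_of_card_lt_of_maps_to hlt
          (fun a ha => Finset.mem_image_of_mem _ ha)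
      exact Set.mem_biUnion hi (Set.mem_biUnion hj ⟨hij, hfeq⟩)
    -- union bound
    calc μ n {ω | ε < |(greedyTime (X n) (k n) ω : ℝ) / (k n : ℝ) - 1|}
        ≤ μ n (⋃ i ∈ Finset.range M, ⋃ j ∈ Finset.range M,
            {ω | i ≠ j ∧ X n i ω = X n j ω}) := measure_mono (sub1.trans sub2)
      _ ≤ ∑ i ∈ Finset.range M, ∑ j ∈ Finset.range M,
            μ n {ω | i ≠ j ∧ X n i ω = X n j ω} := by
          refine (measure_biUnion_finset_le _ _).trans ?_
          exact Finset.sum_le_sum fun i _ => measure_biUnion_finset_le _ _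
      _ ≤ ∑ i ∈ Finset.range M, ∑ j ∈ Finset.range M,
            ENNReal.ofReal (⨆ t, p n t) := by
          refine Finset.sum_le_sum fun i _ => Finset.sum_le_sum fun j _ => ?_
          by_cases hij : i = j
          · have : {ω | i ≠ j ∧ X n i ω = X n j ω} = ∅ := by
              ext ω; simp [hij]
            simp [this]
          · exact le_trans (measure_mono fun ω h => h.2) (pair i j hij)
      _ = (M : ℝ≥0∞) * ((M : ℝ≥0∞) * ENNReal.ofReal (⨆ t, p n t)) := by
          simp [Finset.sum_const, Finset.card_range, mul_assoc, nsmul_eq_mul]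
      _ ≤ ENNReal.ofReal ((1+ε) * (k n : ℝ)) *
            (ENNReal.ofReal ((1+ε) * (k n : ℝ)) * ENNReal.ofReal (⨆ t, p n t)) := by
          gcongr <;> rw [← ENNReal.ofReal_natCast] <;> exact ENNReal.ofReal_le_ofReal hMle
      _ = ENNReal.ofReal ((1+ε)^2 * ((k n : ℝ)^2 * ⨆ i, p n i)) := by
          rw [← ENNReal.ofReal_mul (by positivity : (0:ℝ) ≤ (1+ε) * (k n : ℝ)),
            ← ENNReal.ofReal_mul (by positivity : (0:ℝ) ≤ (1+ε) * (k n : ℝ))]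
          congr 1
          ring
  -- squeeze
  have hupper : Filter.Tendsto
      (fun n => ENNReal.ofReal ((1+ε)^2 * ((k n : ℝ)^2 * ⨆ i, p n i)))
      Filter.atTop (nhds 0) := by
    have h1 : Filter.Tendsto (fun n => (1+ε)^2 * ((k n : ℝ)^2 * ⨆ i, p n i))
        Filter.atTop (nhds 0) := by
      have := hcond.const_mul ((1+ε)^2)
      simpa [mul_comm] using this
    have h2 := ENNReal.tendsto_ofReal h1
    simpa using h2
  exact tendsto_of_tendsto_of_tendsto_of_le_of_le tendsto_const_nhds hupper
    (fun n => zero_le) key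
end

section
/- Fix p ∈ (0, 1). The function g(x_1, ..., x_r) = Σ_{j=1}^r log(1 − p x_j)/(p x_j), defined on the open simplex D = {(x_1, ..., x_r) : x_j ∈ (0,1) for all j, Σ_j x_j = 1}, attains its unique maximum on D at the point (1/r, 1/r, ..., 1/r). -/
lemma log_one_sub_le (t : ℝ) (ht : t ∈ Set.Ioo (0:ℝ) 1) :
    Real.log (1 - t) ≤ -t - t^2/2 := by
  obtain ⟨ht0, ht1⟩ := ht
  set F : ℝ → ℝ := fun s => -s - s^2/2 - Real.log (1 - s) with hF
  have hderiv : ∀ s ∈ Set.Ioo (0:ℝ) 1, HasDerivAt F (s^2/(1-s)) s := by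
    intro s hs
    have h1s : (1:ℝ) - s ≠ 0 := by nlinarith [hs.2]
    have hlog : HasDerivAt (fun s : ℝ => Real.log (1 - s)) (-1/(1-s)) s := by
      exact (((hasDerivAt_id s).const_sub 1)).log h1s
    have h2 : HasDerivAt (fun s : ℝ => -s - s^2/2) (-1 - s) s := by
      have := ((hasDerivAt_id s).neg.sub (((hasDerivAt_pow 2 s)).div_const 2))
      refine this.congr_deriv ?_
      ring
    have := h2.sub hlog
    refine this.congr_deriv ?_
    field_simp
    ring
  have hmono : StrictMonoOn F (Set.Ico (0:ℝ) 1) := by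
    apply strictMonoOn_of_deriv_pos (convex_Ico 0 1)
    · apply ContinuousOn.sub
      · fun_prop
      · apply ContinuousOn.log (by fun_prop)
        intro s hs
        have := hs.2
        simp only [Set.mem_Ico] at hs
        nlinarith [hs.2]
    · intro s hs
      rw [interior_Ico] at hs
      rw [(hderiv s hs).deriv]
      have h1 : 0 < 1 - s := by linarith [hs.2]
      exact div_pos (pow_pos hs.1 2) h1
  have h0 : F 0 = 0 := by simp [hF]
  have := hmono (Set.mem_Ico.2 ⟨le_refl 0, one_pos⟩) (Set.mem_Ico.2 ⟨ht0.le, ht1⟩) ht0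
  rw [h0] at this
  simp only [hF] at this
  linarith

lemma g_strict_concave (p : ℝ) (hp : p ∈ Set.Ioo (0:ℝ) 1) :
    StrictConcaveOn ℝ (Set.Ioo (0:ℝ) 1) (fun y => Real.log (1 - p * y) / (p * y)) := by
  obtain ⟨hp0, hp1⟩ := hp
  set f : ℝ → ℝ := fun y => Real.log (1 - p * y) / (p * y) with hf
  set f1 : ℝ → ℝ := fun y => -((1 - p*y) * y)⁻¹ - Real.log (1 - p*y) / (p * y^2) with hf1
  set f2 : ℝ → ℝ := fun y =>
    (1 - 2*p*y)/((1 - p*y)^2 * y^2) + ((1 - p*y) * y^2)⁻¹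
      + 2 * Real.log (1 - p*y) / (p * y^3) with hf2
  have basics : ∀ y ∈ Set.Ioo (0:ℝ) 1, 0 < y ∧ 0 < p*y ∧ p*y < 1 ∧ 0 < 1 - p*y := by
    intro y hy
    obtain ⟨hy0, hy1⟩ := hy
    refine ⟨hy0, by positivity, ?_, ?_⟩ <;> nlinarith
  have hL : ∀ y ∈ Set.Ioo (0:ℝ) 1,
      HasDerivAt (fun y : ℝ => Real.log (1 - p*y)) (-p/(1 - p*y)) y := by
    intro y hy
    obtain ⟨hy0, hpy0, hpy1, h1⟩ := basics y hy
    have hne : (1:ℝ) - p*y ≠ 0 := ne_of_gt h1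
    have hlin : HasDerivAt (fun y : ℝ => 1 - p*y) (-p) y := by
      simpa using ((hasDerivAt_id y).const_mul p).const_sub 1
    exact hlin.log hne
  have hd1 : ∀ y ∈ Set.Ioo (0:ℝ) 1, HasDerivAt f (f1 y) y := by
    intro y hy
    obtain ⟨hy0, hpy0, hpy1, h1⟩ := basics y hy
    have hden : HasDerivAt (fun y : ℝ => p * y) p y := by simpa using (hasDerivAt_id y).const_mul p
    have h := (hL y hy).div hden (ne_of_gt hpy0)
    refine h.congr_deriv ?_
    simp only [hf1]
    field_simp
  have hd2 : ∀ y ∈ Set.Ioo (0:ℝ) 1, HasDerivAt f1 (f2 y) y := by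
    intro y hy
    obtain ⟨hy0, hpy0, hpy1, h1⟩ := basics y hy
    have hg : HasDerivAt (fun y : ℝ => (1 - p*y) * y) (1 - 2*p*y) y := by
      have hlin : HasDerivAt (fun y : ℝ => 1 - p*y) (-p) y := by
        simpa using ((hasDerivAt_id y).const_mul p).const_sub 1
      have := hlin.mul (hasDerivAt_id y)
      refine this.congr_deriv ?_
      simp only [id_eq]
      ring
    have hA : HasDerivAt (fun y : ℝ => -((1 - p*y) * y)⁻¹)
        ((1 - 2*p*y)/((1 - p*y) * y)^2) y := by
      have hne : (1 - p*y) * y ≠ 0 := by positivity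
      have := (hg.inv hne).neg
      refine this.congr_deriv ?_
      field_simp
    have hden2 : HasDerivAt (fun y : ℝ => p * y^2) (p * (2*y)) y := by
      have := (hasDerivAt_pow 2 y).const_mul p
      refine this.congr_deriv ?_
      ring
    have hB : HasDerivAt (fun y : ℝ => Real.log (1 - p*y) / (p * y^2))
        ((-p/(1 - p*y) * (p * y^2) - Real.log (1 - p*y) * (p * (2*y))) / (p * y^2)^2) y :=
      (hL y hy).div hden2 (by positivity)
    have := hA.sub hB
    refine this.congr_deriv ?_
    simp only [hf2]
    field_simp
    ring
  have hfcont : ContinuousOn f (Set.Ioo (0:ℝ) 1) :=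
    fun y hy => ((hd1 y hy).continuousAt).continuousWithinAt
  apply strictConcaveOn_of_deriv2_neg (convex_Ioo 0 1) hfcont
  intro y hy
  rw [interior_Ioo] at hy
  obtain ⟨hy0, hpy0, hpy1, h1⟩ := basics y hy
  have e1 : deriv f =ᶠ[nhds y] f1 :=
    Filter.eventuallyEq_of_mem (isOpen_Ioo.mem_nhds hy) (fun z hz => (hd1 z hz).deriv)
  have e2 : deriv^[2] f y = f2 y := by
    show deriv (deriv f) y = f2 y
    rw [e1.deriv_eq, (hd2 y hy).deriv]
  rw [e2]
  -- now show f2 y < 0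
  set L := Real.log (1 - p*y) with hLdef
  have hLb : L ≤ -(p*y) - (p*y)^2/2 := log_one_sub_le (p*y) ⟨hpy0, hpy1⟩
  have key : (2 - 3*(p*y))*(p*y) + 2*L*(1 - p*y)^2 < 0 := by
    nlinarith [mul_le_mul_of_nonneg_right hLb (sq_nonneg (1 - p*y)), pow_pos hpy0 4]
  have heq : f2 y = ((2 - 3*(p*y))*(p*y) + 2*L*(1 - p*y)^2) / ((1 - p*y)^2 * p * y^3) := by
    simp only [hf2, hLdef]
    field_simp
    ring
  rw [heq]
  apply div_neg_of_neg_of_pos key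
  positivity

theorem g_unique_max (p : ℝ) (hp : p ∈ Set.Ioo (0 : ℝ) 1) (r : ℕ) (hr : 1 ≤ r)
    (x : Fin r → ℝ) (hx : ∀ j, x j ∈ Set.Ioo (0 : ℝ) 1) (hsum : ∑ j, x j = 1)
    (hne : x ≠ fun _ => (r : ℝ)⁻¹) :
    ∑ j, Real.log (1 - p * x j) / (p * x j) <
      ∑ _j : Fin r, Real.log (1 - p * (r : ℝ)⁻¹) / (p * (r : ℝ)⁻¹) := by
  have hr0 : (0:ℝ) < r := by exact_mod_cast hr
  have hcc := g_strict_concave p hp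
  have hw : ∑ _j : Fin r, (r:ℝ)⁻¹ = 1 := by
    rw [Finset.sum_const, Finset.card_univ, Fintype.card_fin, nsmul_eq_mul]
    field_simp
  have hpne : ∃ j ∈ Finset.univ, ∃ k ∈ Finset.univ, x j ≠ x k := by
    by_contra h
    push_neg at h
    apply hne
    funext j
    have hall : ∀ k : Fin r, x k = x j := fun k =>
      h k (Finset.mem_univ k) j (Finset.mem_univ j)
    have hsum' : (1:ℝ) = r * x j := by
      rw [← hsum, Finset.sum_congr rfl (fun k _ => hall k), Finset.sum_const,
        Finset.card_univ, Fintype.card_fin, nsmul_eq_mul]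
    field_simp
    linarith
  have hjensen := hcc.lt_map_sum (w := fun _ => (r:ℝ)⁻¹) (p := x)
    (fun i _ => by positivity) hw (fun i _ => hx i) hpne
  have hsum2 : ∑ i, (r:ℝ)⁻¹ • x i = (r:ℝ)⁻¹ := by
    simp only [smul_eq_mul, ← Finset.mul_sum, hsum, mul_one]
  rw [hsum2] at hjensen
  simp only [smul_eq_mul, ← Finset.mul_sum] at hjensen
  have h2 : ∑ j, Real.log (1 - p * x j) / (p * x j) <
      (r:ℝ) * (Real.log (1 - p * (r:ℝ)⁻¹) / (p * (r:ℝ)⁻¹)) := by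
    calc ∑ j, Real.log (1 - p * x j) / (p * x j)
        = (r:ℝ) * ((r:ℝ)⁻¹ * ∑ j, Real.log (1 - p * x j) / (p * x j)) := by
          field_simp
      _ < (r:ℝ) * (Real.log (1 - p * (r:ℝ)⁻¹) / (p * (r:ℝ)⁻¹)) := by
          exact mul_lt_mul_of_pos_left hjensen hr0
  calc ∑ j, Real.log (1 - p * x j) / (p * x j)
      < (r:ℝ) * (Real.log (1 - p * (r:ℝ)⁻¹) / (p * (r:ℝ)⁻¹)) := h2
    _ = ∑ _j : Fin r, Real.log (1 - p * (r : ℝ)⁻¹) / (p * (r : ℝ)⁻¹) := by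
        rw [Finset.sum_const, Finset.card_univ, Fintype.card_fin, nsmul_eq_mul]
end

section
/- Fix p ∈ (0, 1) and define τ_r(p) = (1 − p)[r + r² log(1 − p/r)/p − log(1 − p)/p − 1] for each positive integer r. Then the sequence (τ_r(p))_{r≥1} is strictly increasing in r. -/
/-- Key inequality: for `0 < t < 1`, `(t - 1/t)/2 < log t`. -/
lemma log_gt_half_sub (t : ℝ) (h0 : 0 < t) (h1 : t < 1) :
    (t - 1 / t) / 2 < Real.log t := by
  have hcont : ContinuousOn (fun x : ℝ => Real.log x - x / 2 + 1 / (2 * x)) (Set.Icc t 1) := by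
    apply ContinuousOn.add
    · exact ContinuousOn.sub
        (Real.continuousOn_log.mono (fun x hx => by
          simp only [Set.mem_compl_iff, Set.mem_singleton_iff]
          exact ne_of_gt (lt_of_lt_of_le h0 hx.1)))
        (continuousOn_id.div_const 2)
    · exact continuousOn_const.div (continuousOn_const.mul continuousOn_id)
        (fun x hx => by
          have : 0 < x := lt_of_lt_of_le h0 hx.1
          positivity)
  have hderiv : ∀ x ∈ interior (Set.Icc t 1),
      deriv (fun x : ℝ => Real.log x - x / 2 + 1 / (2 * x)) x < 0 := by
    intro x hx
    rw [interior_Icc] at hx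
    have hx0 : 0 < x := lt_trans h0 hx.1
    have hxne : x ≠ 0 := ne_of_gt hx0
    have d1 : HasDerivAt Real.log (1 / x) x := by
      simpa [one_div] using Real.hasDerivAt_log hxne
    have d2 : HasDerivAt (fun x : ℝ => x / 2) (1 / 2) x := by
      simpa using (hasDerivAt_id x).div_const 2
    have d3 : HasDerivAt (fun x : ℝ => 2 * x) 2 x := by
      simpa using (hasDerivAt_id x).const_mul 2
    have d4 : HasDerivAt (fun x : ℝ => 1 / (2 * x)) (-2 / (2 * x) ^ 2) x := by
      simpa [one_div] using d3.fun_inv (by positivity : (2 : ℝ) * x ≠ 0)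
    have hd : HasDerivAt (fun x : ℝ => Real.log x - x / 2 + 1 / (2 * x))
        (1 / x - 1 / 2 + -2 / (2 * x) ^ 2) x := (d1.sub d2).add d4
    rw [hd.deriv]
    have key : 1 / x - 1 / 2 + -2 / (2 * x) ^ 2 = -((x - 1) ^ 2 / (2 * x ^ 2)) := by
      field_simp
      ring
    rw [key]
    have hne1 : x - 1 ≠ 0 := sub_ne_zero.mpr (ne_of_lt hx.2)
    have h2 : 0 < (x - 1) ^ 2 / (2 * x ^ 2) := by positivity
    linarith
  have hanti : StrictAntiOn (fun x : ℝ => Real.log x - x / 2 + 1 / (2 * x)) (Set.Icc t 1) :=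
    strictAntiOn_of_deriv_neg (convex_Icc t 1) hcont hderiv
  have ht : t ∈ Set.Icc t 1 := ⟨le_refl t, le_of_lt h1⟩
  have h1' : (1 : ℝ) ∈ Set.Icc t 1 := ⟨le_of_lt h1, le_refl 1⟩
  have hlt0 := hanti ht h1' h1
  simp only [Real.log_one] at hlt0
  have hlt : 0 < Real.log t - t / 2 + 1 / (2 * t) := by
    have h2 : (0 : ℝ) - 1 / 2 + 1 / (2 * 1) = 0 := by norm_num
    linarith
  have heq : (t - 1 / t) / 2 = t / 2 - 1 / (2 * t) := by
    field_simp
  rw [heq]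
  linarith

/-- The derivative of `x ↦ x + x^2 * log (1 - p/x) / p` at `x ≥ 1` (with `0 < p < 1`). -/
lemma g_hasDerivAt (p : ℝ) (hp : p ∈ Set.Ioo (0 : ℝ) 1) (x : ℝ) (hx : 1 ≤ x) :
    HasDerivAt (fun y : ℝ => y + y ^ 2 * Real.log (1 - p / y) / p)
      (1 + (2 * x * Real.log (1 - p / x) + x ^ 2 * (p / x ^ 2 / (1 - p / x))) / p) x := by
  have hx0 : (0 : ℝ) < x := lt_of_lt_of_le one_pos hx
  have hxne : x ≠ 0 := ne_of_gt hx0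
  have hu : 0 < 1 - p / x := by
    have : p / x < 1 := by
      rw [div_lt_one hx0]; exact lt_of_lt_of_le hp.2 hx
    linarith
  have hinv : HasDerivAt (fun y : ℝ => p / y) (-(p / x ^ 2)) x := by
    simpa [div_eq_mul_inv, mul_neg, mul_comm] using (hasDerivAt_inv hxne).const_mul p
  have d1 : HasDerivAt (fun y : ℝ => 1 - p / y) (p / x ^ 2) x := by
    simpa using hinv.const_sub 1
  have d2 : HasDerivAt (fun y : ℝ => Real.log (1 - p / y)) (p / x ^ 2 / (1 - p / x)) x :=
    d1.log (ne_of_gt hu)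
  have d3 : HasDerivAt (fun y : ℝ => y ^ 2) (2 * x) x := by
    simpa using hasDerivAt_pow 2 x
  have d4 := (d3.mul d2).div_const p
  have d5 := (hasDerivAt_id x).add d4
  exact d5

theorem tau_strictly_increasing (p : ℝ) (hp : p ∈ Set.Ioo (0 : ℝ) 1)
    (r s : ℕ) (hr : 1 ≤ r) (hrs : r < s) :
    (1 - p) * ((r : ℝ) + (r : ℝ) ^ 2 * Real.log (1 - p / r) / p - Real.log (1 - p) / p - 1) <
      (1 - p) * ((s : ℝ) + (s : ℝ) ^ 2 * Real.log (1 - p / s) / p - Real.log (1 - p) / p - 1) := by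
  obtain ⟨hp0, hp1⟩ := hp
  have hmono : StrictMonoOn (fun y : ℝ => y + y ^ 2 * Real.log (1 - p / y) / p)
      (Set.Ici 1) := by
    apply strictMonoOn_of_deriv_pos (convex_Ici 1)
    · intro x hx
      exact (g_hasDerivAt p ⟨hp0, hp1⟩ x hx).continuousAt.continuousWithinAt
    · intro x hx
      rw [interior_Ici] at hx
      have hx1 : 1 ≤ x := le_of_lt hx
      have hx0 : (0 : ℝ) < x := lt_of_lt_of_le one_pos hx1
      rw [(g_hasDerivAt p ⟨hp0, hp1⟩ x hx1).deriv]
      have hu0 : 0 < p / x := div_pos hp0 hx0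
      have hu1 : p / x < 1 := by
        rw [div_lt_one hx0]; exact lt_of_lt_of_le hp1 hx1
      have hden : 0 < 1 - p / x := by linarith
      have hlog : ((1 - p / x) - 1 / (1 - p / x)) / 2 < Real.log (1 - p / x) :=
        log_gt_half_sub _ hden (by linarith)
      have hxp : 0 < x - p := by nlinarith
      have hsimp : x ^ 2 * (p / x ^ 2 / (1 - p / x)) = p * x / (x - p) := by
        field_simp
      rw [hsimp]
      have key : 2 * x * Real.log (1 - p / x) + p * x / (x - p) > -p := by
        have hb : 2 * x * (((1 - p / x) - 1 / (1 - p / x)) / 2) <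
            2 * x * Real.log (1 - p / x) := by
          apply mul_lt_mul_of_pos_left hlog
          linarith
        have heq : 2 * x * (((1 - p / x) - 1 / (1 - p / x)) / 2) + p * x / (x - p) = -p := by
          have hd : (1 - p / x) = (x - p) / x := by field_simp
          rw [hd]
          field_simp
          ring
        linarith
      have hgt : (2 * x * Real.log (1 - p / x) + p * x / (x - p)) / p > -1 := by
        rw [gt_iff_lt, lt_div_iff₀ hp0]
        linarith
      linarith
  have hr1 : (1 : ℝ) ≤ (r : ℝ) := by exact_mod_cast hr
  have hs1 : (1 : ℝ) ≤ (s : ℝ) := by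
    have : 1 ≤ s := le_of_lt (lt_of_le_of_lt hr hrs)
    exact_mod_cast this
  have hrs' : (r : ℝ) < (s : ℝ) := by exact_mod_cast hrs
  have h := hmono hr1 hs1 hrs'
  simp only at h
  rw [mul_lt_mul_iff_right₀ (by linarith : (0:ℝ) < 1 - p)]
  linarith
end

section
/- For every p ∈ (0,1), the function φ(x) = x + x² log(1 − p/x)/p is strictly increasing on [1, ∞). -/
lemma log_gt_aux (u : ℝ) (hu0 : 0 < u) (hu1 : u < 1) : (u - 1/u)/2 < Real.log u := by
  have hs : 0 < -Real.log u := by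
    have := Real.log_neg hu0 hu1; linarith
  have h := Real.self_lt_sinh_iff.2 hs
  rw [Real.sinh_eq] at h
  have h1 : Real.exp (-Real.log u) = 1/u := by
    rw [Real.exp_neg, Real.exp_log hu0, one_div]
  have h2 : Real.exp (-(-Real.log u)) = u := by
    simp [Real.exp_log hu0]
  rw [h1, h2] at h
  linarith

theorem phi_strictMonoOn (p : ℝ) (hp : p ∈ Set.Ioo (0 : ℝ) 1) :
    StrictMonoOn (fun x : ℝ => x + x ^ 2 * Real.log (1 - p / x) / p) (Set.Ici (1 : ℝ)) := by
  obtain ⟨hp0, hp1⟩ := hp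
  have hpos : ∀ x : ℝ, 1 ≤ x → 0 < 1 - p / x := by
    intro x hx
    have hx0 : 0 < x := lt_of_lt_of_le one_pos hx
    have : p / x ≤ p := by
      rw [div_le_iff₀ hx0]; nlinarith
    linarith
  apply strictMonoOn_of_deriv_pos (convex_Ici 1)
  · apply ContinuousOn.add continuousOn_id
    apply ContinuousOn.div_const
    apply ContinuousOn.mul (by fun_prop)
    apply ContinuousOn.log
    · apply ContinuousOn.sub continuousOn_const
      apply ContinuousOn.div continuousOn_const continuousOn_id
      intro x hx; exact ne_of_gt (lt_of_lt_of_le one_pos hx)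
    · intro x hx; exact ne_of_gt (hpos x hx)
  · intro x hx
    rw [interior_Ici] at hx
    have hx1 : (1:ℝ) < x := hx
    have hx0 : 0 < x := lt_trans one_pos hx1
    have hu : 0 < 1 - p / x := hpos x hx1.le
    have hu1 : 1 - p / x < 1 := by
      have : 0 < p / x := div_pos hp0 hx0
      linarith
    -- derivative computation
    have hd1 : HasDerivAt (fun y : ℝ => 1 - p / y) (p / x ^ 2) x := by
      have : HasDerivAt (fun y : ℝ => p / y) (p * -(x ^ 2)⁻¹) x := by
        simpa [div_eq_mul_inv] using (hasDerivAt_inv (ne_of_gt hx0)).const_mul p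
      simpa [div_eq_mul_inv] using this.const_sub 1
    have hlog : HasDerivAt (fun y : ℝ => Real.log (1 - p / y))
        (p / x ^ 2 / (1 - p / x)) x := hd1.log (ne_of_gt hu)
    have hmul : HasDerivAt (fun y : ℝ => y ^ 2 * Real.log (1 - p / y))
        (2 * x * Real.log (1 - p / x) + x ^ 2 * (p / x ^ 2 / (1 - p / x))) x := by
      simpa using (hasDerivAt_pow 2 x).fun_mul hlog
    have hf : HasDerivAt (fun y : ℝ => y + y ^ 2 * Real.log (1 - p / y) / p)
        (1 + (2 * x * Real.log (1 - p / x) + x ^ 2 * (p / x ^ 2 / (1 - p / x))) / p) x :=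
      (hasDerivAt_id x).add (hmul.div_const p)
    rw [hf.deriv]
    -- positivity
    set u := 1 - p / x with hudef
    have hlogu : (u - 1/u)/2 < Real.log u := log_gt_aux u hu hu1
    have hsimp : x ^ 2 * (p / x ^ 2 / u) = p / u := by
      field_simp
    rw [hsimp]
    have key : 1 + (2 * x * ((u - 1/u)/2) + p / u) / p = 0 := by
      have hxp : x - p ≠ 0 := by intro h; nlinarith
      rw [hudef]
      field_simp
      ring
    have h2 : (2 * x * ((u - 1/u)/2) + p / u) / p <
        (2 * x * Real.log u + p / u) / p := by
      gcongr
    linarith [key, h2]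
end

section
/- For every p ∈ (0,1) and every x ≥ 1, the derivative φ'(x) = 1 + 2x log(1 − p/x)/p + x/(x − p) of φ(x) = x + x² log(1 − p/x)/p is strictly positive, and φ'(x) → 0 as x → ∞. -/
open Real Filter

private lemma hasDerivAt_G {t : ℝ} (ht : t < 1) :
    HasDerivAt (fun s : ℝ => Real.log (1 - s) + s * (2 - s) / (2 * (1 - s)))
      (t ^ 2 / (2 * (1 - t) ^ 2)) t := by
  have h1 : (0:ℝ) < 1 - t := by linarith
  have hlog : HasDerivAt (fun s : ℝ => Real.log (1 - s)) (-1 / (1 - t)) t := by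
    have := ((hasDerivAt_id t).const_sub 1).log (by positivity)
    simpa using this
  have hu : HasDerivAt (fun s : ℝ => s * (2 - s)) (1 * (2 - t) + t * (-1)) t := by
    exact ((hasDerivAt_id t).mul ((hasDerivAt_id t).const_sub 2)).congr_deriv (by simp)
  have hv : HasDerivAt (fun s : ℝ => 2 * (1 - s)) (2 * (-1)) t := by
    simpa using ((hasDerivAt_id t).const_sub 1).const_mul 2
  have hdiv := hu.div hv (by positivity)
  have := hlog.add hdiv
  refine this.congr_deriv ?_
  field_simp
  ring

private lemma G_pos {t : ℝ} (ht : t ∈ Set.Ioo (0:ℝ) 1) :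
    0 < Real.log (1 - t) + t * (2 - t) / (2 * (1 - t)) := by
  set G : ℝ → ℝ := fun s => Real.log (1 - s) + s * (2 - s) / (2 * (1 - s)) with hG
  have hmono : StrictMonoOn G (Set.Ico (0:ℝ) 1) := by
    apply strictMonoOn_of_deriv_pos (convex_Ico 0 1)
    · intro s hs
      exact ((hasDerivAt_G (hs.2)).differentiableAt).continuousAt.continuousWithinAt
    · intro s hs
      rw [interior_Ico] at hs
      rw [(hasDerivAt_G hs.2).deriv]
      have h1 : (0:ℝ) < 1 - s := by linarith [hs.2]
      have := hs.1
      positivity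
  have h0 : G 0 = 0 := by simp [hG]
  have := hmono (Set.mem_Ico.mpr ⟨le_refl 0, one_pos⟩)
      (Set.mem_Ico.mpr ⟨le_of_lt ht.1, ht.2⟩) ht.1
  rw [h0] at this
  exact this

theorem phi_deriv_pos_and_tendsto_zero (p : ℝ) (hp : p ∈ Set.Ioo (0 : ℝ) 1) :
    (∀ x : ℝ, 1 ≤ x →
        HasDerivAt (fun y : ℝ => y + y ^ 2 * Real.log (1 - p / y) / p)
          (1 + 2 * x * Real.log (1 - p / x) / p + x / (x - p)) x) ∧
    (∀ x : ℝ, 1 ≤ x → 0 < 1 + 2 * x * Real.log (1 - p / x) / p + x / (x - p)) ∧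
    Filter.Tendsto (fun x : ℝ => 1 + 2 * x * Real.log (1 - p / x) / p + x / (x - p))
      Filter.atTop (nhds 0) := by
  obtain ⟨hp0, hp1⟩ := hp
  refine ⟨?_, ?_, ?_⟩
  · -- derivative
    intro x hx
    have hx0 : (0:ℝ) < x := lt_of_lt_of_le one_pos hx
    have hxp : (0:ℝ) < x - p := by linarith
    have h1 : (0:ℝ) < 1 - p / x := by
      rw [sub_pos, div_lt_one hx0]; linarith
    have hinner : HasDerivAt (fun y : ℝ => 1 - p / y) (p / x ^ 2) x := by
      have : HasDerivAt (fun y : ℝ => p / y) (p * (-(x ^ 2)⁻¹)) x := by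
        simpa [div_eq_mul_inv] using (hasDerivAt_inv (ne_of_gt hx0)).const_mul p
      have := this.const_sub 1
      refine this.congr_deriv ?_
      field_simp
    have hlog : HasDerivAt (fun y : ℝ => Real.log (1 - p / y))
        ((p / x ^ 2) / (1 - p / x)) x := hinner.log (ne_of_gt h1)
    have hpow : HasDerivAt (fun y : ℝ => y ^ 2) (2 * x) x := by
      simpa using hasDerivAt_pow 2 x
    have hmul := (hpow.mul hlog).div_const p
    have := (hasDerivAt_id x).add hmul
    refine this.congr_deriv ?_
    field_simp
    ring
  · -- positivity
    intro x hx
    have hx0 : (0:ℝ) < x := lt_of_lt_of_le one_pos hx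
    have hxp : (0:ℝ) < x - p := by linarith
    set t : ℝ := p / x with hts
    have htmem : t ∈ Set.Ioo (0:ℝ) 1 := by
      constructor
      · positivity
      · rw [hts, div_lt_one hx0]; linarith
    have hG := G_pos htmem
    have ht0 : (0:ℝ) < t := htmem.1
    have ht1 : (0:ℝ) < 1 - t := by linarith [htmem.2]
    have key : 1 + 2 * x * Real.log (1 - p / x) / p + x / (x - p)
        = (2 / t) * (Real.log (1 - t) + t * (2 - t) / (2 * (1 - t))) := by
      rw [hts]
      field_simp
      ring
    rw [key]
    positivity
  · -- tendsto
    have hA : Filter.Tendsto (fun x : ℝ => 2 * x * Real.log (1 - p / x) / p)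
        Filter.atTop (nhds (-2)) := by
      have base := Real.tendsto_mul_log_one_add_div_atTop (-p)
      have h2 : Filter.Tendsto (fun x : ℝ => (2 / p) * (x * Real.log (1 + -p / x)))
          Filter.atTop (nhds ((2 / p) * (-p))) := base.const_mul _
      have heq : (fun x : ℝ => (2 / p) * (x * Real.log (1 + -p / x)))
          = fun x : ℝ => 2 * x * Real.log (1 - p / x) / p := by
        funext x
        rw [neg_div, ← sub_eq_add_neg]
        ring
      rw [heq] at h2
      have : (2 / p) * (-p) = -2 := by field_simp
      rwa [this] at h2
    have hB : Filter.Tendsto (fun x : ℝ => x / (x - p)) Filter.atTop (nhds 1) := by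
      have hsub : Filter.Tendsto (fun x : ℝ => x - p) Filter.atTop Filter.atTop :=
        tendsto_atTop_add_const_right _ (-p) tendsto_id |>.congr (fun x => by simp [sub_eq_add_neg])
      have hfrac : Filter.Tendsto (fun x : ℝ => p / (x - p)) Filter.atTop (nhds 0) :=
        Filter.Tendsto.div_atTop tendsto_const_nhds hsub
      have h1 : Filter.Tendsto (fun x : ℝ => 1 + p / (x - p)) Filter.atTop (nhds (1 + 0)) :=
        tendsto_const_nhds.add hfrac
      rw [add_zero] at h1
      apply h1.congr'
      filter_upwards [Filter.eventually_gt_atTop p] with x hxp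
      have : x - p ≠ 0 := by linarith
      field_simp
      ring
    have hC : Filter.Tendsto (fun _ : ℝ => (1:ℝ)) Filter.atTop (nhds 1) := tendsto_const_nhds
    have hsum := (hC.add hA).add hB
    have h0 : (1:ℝ) + -2 + 1 = 0 := by norm_num
    rw [h0] at hsum
    exact hsum
end

section
/- The function τ(m) = (1 − m)(−m/2 − log(1 − m)/m − 1) is strictly positive on (0, 1). -/
lemma tau_key (m : ℝ) (h0 : 0 < m) (h1 : m < 1) :
    m + m ^ 2 / 2 < -Real.log (1 - m) := by
  set f : ℝ → ℝ := fun x => -Real.log (1 - x) - x - x ^ 2 / 2 with hf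
  have hderiv : ∀ x ∈ Set.Ioo (0 : ℝ) m, HasDerivAt f ((1 - x)⁻¹ - 1 - x) x := by
    intro x hx
    have hx1 : (1 : ℝ) - x ≠ 0 := by nlinarith [hx.1, hx.2]
    have h1 : HasDerivAt (fun x : ℝ => 1 - x) (-1) x := by
      simpa using (hasDerivAt_id x).const_sub 1
    have h2 : HasDerivAt (fun x : ℝ => Real.log (1 - x)) ((1 - x)⁻¹ * (-1)) x :=
      (Real.hasDerivAt_log hx1).comp x h1
    have h3 : HasDerivAt (fun x : ℝ => x ^ 2 / 2) x x := by
      simpa using ((hasDerivAt_pow 2 x).div_const 2)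
    have := ((h2.neg.sub (hasDerivAt_id x)).sub h3)
    exact this.congr_deriv (by ring)
  have hcont : ContinuousOn f (Set.Icc 0 m) := by
    apply ContinuousOn.sub
    apply ContinuousOn.sub
    · apply ContinuousOn.neg
      apply (Real.continuousOn_log.comp (by fun_prop))
      intro x hx
      simp only [Set.mem_Icc] at hx
      have : (1 : ℝ) - x ≠ 0 := by nlinarith [hx.1, hx.2]
      simpa using this
    · exact continuousOn_id
    · fun_prop
  have hmono : StrictMonoOn f (Set.Icc 0 m) := by
    apply strictMonoOn_of_deriv_pos (convex_Icc 0 m) hcont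
    intro x hx
    rw [interior_Icc] at hx
    rw [(hderiv x hx).deriv]
    have hx1 : (0 : ℝ) < 1 - x := by nlinarith [hx.1, hx.2]
    rw [sub_sub, sub_pos, inv_eq_one_div, lt_div_iff₀ hx1]
    nlinarith [hx.1]
  have h := hmono (Set.left_mem_Icc.mpr h0.le) (Set.right_mem_Icc.mpr h0.le) h0
  simp only [hf, Real.log_one, sub_zero, neg_zero] at h
  norm_num at h
  linarith

theorem tau_pos (m : ℝ) (hm : m ∈ Set.Ioo (0 : ℝ) 1) :
    0 < (1 - m) * (-m / 2 - Real.log (1 - m) / m - 1) := by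
  obtain ⟨h0, h1⟩ := hm
  have hkey := tau_key m h0 h1
  have h1m : (0 : ℝ) < 1 - m := by linarith
  apply mul_pos h1m
  rw [sub_sub, sub_pos, div_add' _ _ _ h0.ne', div_lt_iff₀ h0]
  nlinarith
end

section
/- Let p ∈ (0,1), let r ≥ 2, and let x_1, ..., x_r ∈ (0,1) with Σ_{j=1}^r x_j = 1. Then (r − 1) + Σ_{j=1}^r log(1 − p x_j)/(p x_j) − log(1 − p)/p > 0. -/
open Real

/-- Helper: derivative of ψ(t) = t²/(1-t) + 2 log(1-t) + 2t. -/
lemma hasDerivAt_psi (t : ℝ) (h : (1 : ℝ) - t ≠ 0) :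
    HasDerivAt (fun u : ℝ => u ^ 2 / (1 - u) + 2 * Real.log (1 - u) + 2 * u)
      (t ^ 2 / (1 - t) ^ 2) t := by
  have h1 : HasDerivAt (fun u : ℝ => (1 : ℝ) - u) (-1) t := by
    simpa using (hasDerivAt_id' t).const_sub (1 : ℝ)
  have hdiv : HasDerivAt (fun u : ℝ => u ^ 2 / (1 - u))
      (((2 : ℕ) * t ^ (2 - 1) * (1 - t) - t ^ 2 * (-1)) / (1 - t) ^ 2) t :=
    (hasDerivAt_pow 2 t).div h1 h
  have hlog : HasDerivAt (fun u : ℝ => 2 * Real.log (1 - u)) (2 * (-1 / (1 - t))) t :=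
    (h1.log h).const_mul 2
  have hlin : HasDerivAt (fun u : ℝ => 2 * u) 2 t := by
    simpa using (hasDerivAt_id t).const_mul (2 : ℝ)
  have : HasDerivAt (fun u : ℝ => u ^ 2 / (1 - u) + 2 * Real.log (1 - u) + 2 * u) _ t :=
    (hdiv.add hlog).add hlin
  convert this using 1
  field_simp
  ring

/-- ψ(t) > 0 on (0,1). -/
lemma psi_pos {t : ℝ} (ht : t ∈ Set.Ioo (0 : ℝ) 1) :
    0 < t ^ 2 / (1 - t) + 2 * Real.log (1 - t) + 2 * t := by
  have hmono : StrictMonoOn (fun u : ℝ => u ^ 2 / (1 - u) + 2 * Real.log (1 - u) + 2 * u)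
      (Set.Ico (0 : ℝ) 1) := by
    apply strictMonoOn_of_deriv_pos (convex_Ico 0 1)
    · intro u hu
      have h : (1 : ℝ) - u ≠ 0 := by
        have := hu.2; intro hc; nlinarith [hu.1]
      exact (hasDerivAt_psi u h).continuousAt.continuousWithinAt
    · intro u hu
      rw [interior_Ico] at hu
      have h : (1 : ℝ) - u ≠ 0 := by
        have := hu.2; intro hc; nlinarith [hu.1]
      rw [(hasDerivAt_psi u h).deriv]
      have h1 : 0 < 1 - u := by linarith [hu.2]
      exact div_pos (pow_pos hu.1 2) (pow_pos h1 2)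
  have h0 : (0 : ℝ) ∈ Set.Ico (0 : ℝ) 1 := by constructor <;> norm_num
  have htI : t ∈ Set.Ico (0 : ℝ) 1 := ⟨le_of_lt ht.1, ht.2⟩
  have := hmono h0 htI ht.1
  simpa using this

/-- Helper: derivative of φ(t) = (-log(1-t) - t)/t². -/
lemma hasDerivAt_phi (t : ℝ) (ht : t ∈ Set.Ioo (0 : ℝ) 1) :
    HasDerivAt (fun u : ℝ => (-Real.log (1 - u) - u) / u ^ 2)
      ((t ^ 2 / (1 - t) + 2 * Real.log (1 - t) + 2 * t) / t ^ 3) t := by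
  have h1t : (1 : ℝ) - t ≠ 0 := by
    have := ht.2; intro hc; nlinarith [ht.1]
  have ht0 : t ≠ 0 := ne_of_gt ht.1
  have h1 : HasDerivAt (fun u : ℝ => (1 : ℝ) - u) (-1) t := by
    simpa using (hasDerivAt_id' t).const_sub (1 : ℝ)
  have hN : HasDerivAt (fun u : ℝ => -Real.log (1 - u) - u) (-(-1 / (1 - t)) - 1) t :=
    (h1.log h1t).neg.sub (hasDerivAt_id t)
  have hdiv : HasDerivAt (fun u : ℝ => (-Real.log (1 - u) - u) / u ^ 2)
      (((-(-1 / (1 - t)) - 1) * t ^ 2 - (-Real.log (1 - t) - t) * ((2 : ℕ) * t ^ (2 - 1))) /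
        (t ^ 2) ^ 2) t :=
    hN.div (hasDerivAt_pow 2 t) (pow_ne_zero 2 ht0)
  convert hdiv using 1
  field_simp
  ring

/-- φ is strictly monotone on (0,1). -/
lemma phi_strictMono : StrictMonoOn (fun u : ℝ => (-Real.log (1 - u) - u) / u ^ 2)
    (Set.Ioo (0 : ℝ) 1) := by
  apply strictMonoOn_of_deriv_pos (convex_Ioo 0 1)
  · intro u hu
    exact (hasDerivAt_phi u hu).continuousAt.continuousWithinAt
  · intro u hu
    rw [interior_Ioo] at hu
    rw [(hasDerivAt_phi u hu).deriv]
    exact div_pos (psi_pos hu) (pow_pos hu.1 3)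

theorem splitting_gain_pos (p : ℝ) (hp : p ∈ Set.Ioo (0 : ℝ) 1) (r : ℕ) (hr : 2 ≤ r)
    (x : Fin r → ℝ) (hx : ∀ j, x j ∈ Set.Ioo (0 : ℝ) 1) (hsum : ∑ j, x j = 1) :
    0 < ((r : ℝ) - 1) + (∑ j, Real.log (1 - p * x j) / (p * x j)) - Real.log (1 - p) / p := by
  obtain ⟨hp0, hp1⟩ := hp
  set φ : ℝ → ℝ := fun u => (-Real.log (1 - u) - u) / u ^ 2 with hφ
  -- each p * x j is in (0, p) ⊆ (0,1)
  have hpx : ∀ j, p * x j ∈ Set.Ioo (0 : ℝ) 1 := by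
    intro j
    obtain ⟨h0, h1⟩ := hx j
    constructor
    · exact mul_pos hp0 h0
    · nlinarith
  have hpxlt : ∀ j, p * x j < p := by
    intro j
    obtain ⟨h0, h1⟩ := hx j
    nlinarith
  have hφlt : ∀ j, φ (p * x j) < φ p :=
    fun j => phi_strictMono (hpx j) ⟨hp0, hp1⟩ (hpxlt j)
  -- key sum inequality
  have hne : (Finset.univ : Finset (Fin r)).Nonempty :=
    ⟨⟨0, by omega⟩, Finset.mem_univ _⟩
  have hS : ∑ j, x j * φ (p * x j) < ∑ j, x j * φ p := by
    apply Finset.sum_lt_sum_of_nonempty hne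
    intro j _
    exact mul_lt_mul_of_pos_left (hφlt j) (hx j).1
  have hSsum : ∑ j, x j * φ p = φ p := by
    rw [← Finset.sum_mul, hsum, one_mul]
  rw [hSsum] at hS
  -- rewrite each term
  have e1 : ∀ j, Real.log (1 - p * x j) / (p * x j) = -1 - (p * x j) * φ (p * x j) := by
    intro j
    have h0 : p * x j ≠ 0 := ne_of_gt (hpx j).1
    rw [hφ]
    simp only
    rw [pow_two, ← div_div (-Real.log (1 - p * x j) - p * x j), mul_div_cancel₀ _ h0, sub_div, div_self h0]
    ring
  have e2 : Real.log (1 - p) / p = -1 - p * φ p := by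
    have h0 : p ≠ 0 := ne_of_gt hp0
    rw [hφ]
    field_simp
    ring
  have esum : ∑ j, Real.log (1 - p * x j) / (p * x j)
      = -(r : ℝ) - p * ∑ j, x j * φ (p * x j) := by
    rw [Finset.sum_congr rfl (fun j _ => e1 j)]
    rw [Finset.sum_sub_distrib, Finset.mul_sum]
    simp [mul_comm, mul_assoc, mul_left_comm]
  rw [esum, e2]
  have : p * (∑ j, x j * φ (p * x j)) < p * φ p :=
    mul_lt_mul_of_pos_left hS hp0
  linarith
end

section
/- Let k ≥ 1 and let (P^{(n)}) be a sequence of probability distributions on ℕ with sup_i p_i^{(n)} → 0 as n → ∞. Fix a node i and an r-splitting of node i with probabilities converging as n → ∞; let P_r^{(n)} be the resulting split distributions. Let v_k^{(n)} and v_{k,r}^{(n)} denote the greedy sample sizes (number of i.i.d. samples until k distinct elements) under P^{(n)} and P_r^{(n)} respectively, and let A_k^{(n)}(i) and Σ_{j=1}^r A_k^{(r,n)}(i_j) denote the occurrence counts of node i and of the split nodes. Then |Σ_{j=1}^r E[A_k^{(r,n)}(i_j)/v_{k,r}^{(n)}] − E[A_k^{(n)}(i)/v_k^{(n)}]| → 0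 as n → ∞; i.e., the voting scheme (id, 1) is asymptotically fair. -/
open MeasureTheory ProbabilityTheory
open scoped ENNReal

/-- The number of occurrences of the value `i` among the greedy sample of size
`greedyTime X k ω`. -/
noncomputable def occCount {Ω α : Type*} [DecidableEq α] (X : ℕ → Ω → α) (i : α) (k : ℕ)
    (ω : Ω) : ℕ :=
  ((Finset.range (greedyTime X k ω)).filter fun j => X j ω = i).card

section helpers

variable {Ω β : Type*} [MeasurableSpace Ω] [MeasurableSpace β] [MeasurableSingletonClass β]
  [Countable β] [DecidableEq β]

instance sumMSC {α γ : Type*} [MeasurableSpace α] [MeasurableSpace γ]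
    [MeasurableSingletonClass α] [MeasurableSingletonClass γ] :
    MeasurableSingletonClass (α ⊕ γ) := by
  constructor
  rintro (a | c)
  · rw [← Set.image_singleton]
    exact (measurableSet_singleton a).inl_image
  · rw [← Set.image_singleton]
    exact (measurableSet_singleton c).inr_image

lemma setOf_eq_eq_iUnion (f g : Ω → β) :
    {ω | f ω = g ω} = ⋃ a, f ⁻¹' {a} ∩ g ⁻¹' {a} := by
  ext ω
  simp only [Set.mem_setOf_eq, Set.mem_iUnion, Set.mem_inter_iff, Set.mem_preimage,
    Set.mem_singleton_iff]
  exact ⟨fun h => ⟨g ω, h, rfl⟩, fun ⟨a, h1, h2⟩ => h1.trans h2.symm⟩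

lemma measSet_eq {f g : Ω → β} (hf : Measurable f) (hg : Measurable g) :
    MeasurableSet {ω | f ω = g ω} := by
  rw [setOf_eq_eq_iUnion]
  exact MeasurableSet.iUnion fun a =>
    (hf (measurableSet_singleton a)).inter (hg (measurableSet_singleton a))

lemma measurable_imageCard (X : ℕ → Ω → β) (hX : ∀ j, Measurable (X j)) (m : ℕ) :
    Measurable fun ω => ((Finset.range m).image fun j => X j ω).card := by
  induction m with
  | zero => simpa using measurable_const
  | succ m ih =>
      have key : ∀ ω, ((Finset.range (m + 1)).image fun j => X j ω).card
          = (if ∃ j < m, X j ω = X m ω then 0 else 1)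
            + ((Finset.range m).image fun j => X j ω).card := by
        intro ω
        rw [Finset.range_add_one, Finset.image_insert]
        by_cases h : X m ω ∈ (Finset.range m).image fun j => X j ω
        · rw [Finset.card_insert_of_mem h, if_pos, zero_add]
          simp only [Finset.mem_image, Finset.mem_range] at h
          obtain ⟨j, hj, hje⟩ := h
          exact ⟨j, hj, hje⟩
        · rw [Finset.card_insert_of_notMem h, if_neg, add_comm]
          simp only [Finset.mem_image, Finset.mem_range] at h
          rintro ⟨j, hj, hje⟩
          exact h ⟨j, hj, hje⟩
      simp only [key]
      have hset : MeasurableSet {ω | ∃ j < m, X j ω = X m ω} := by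
        have : {ω | ∃ j < m, X j ω = X m ω} = ⋃ j, ⋃ _ : j < m, {ω | X j ω = X m ω} := by
          ext ω; simp
        rw [this]
        exact MeasurableSet.iUnion fun j => MeasurableSet.iUnion fun _ =>
          measSet_eq (hX j) (hX m)
      exact (Measurable.ite hset measurable_const measurable_const).add ih

lemma measurable_sInfSet {P : ℕ → Ω → Prop} (h : ∀ m, MeasurableSet {ω | P m ω}) :
    Measurable fun ω => sInf {m | P m ω} := by
  apply measurable_to_countable'
  intro v
  have heq : (fun ω => sInf {m | P m ω}) ⁻¹' {v}
      = {ω | (P v ω ∧ ∀ m < v, ¬ P m ω) ∨ (v = 0 ∧ ∀ m, ¬ P m ω)} := by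
    ext ω
    simp only [Set.mem_preimage, Set.mem_singleton_iff, Set.mem_setOf_eq]
    constructor
    · intro hv
      by_cases hne : {m | P m ω}.Nonempty
      · left
        subst hv
        exact ⟨Nat.sInf_mem hne, fun m hm => Nat.notMem_of_lt_sInf hm⟩
      · right
        rw [Set.not_nonempty_iff_eq_empty] at hne
        refine ⟨?_, fun m => ?_⟩
        · rw [← hv, hne, Nat.sInf_empty]
        · exact fun hm => (Set.eq_empty_iff_forall_notMem.mp hne m) hm
    · rintro (⟨h1, h2⟩ | ⟨h1, h2⟩)
      · refine le_antisymm (Nat.sInf_le h1) ?_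
        by_contra hlt
        push_neg at hlt
        have hmem : sInf {m | P m ω} ∈ {m | P m ω} := Nat.sInf_mem ⟨v, h1⟩
        exact h2 _ hlt hmem
      · subst h1
        have : {m | P m ω} = ∅ := Set.eq_empty_iff_forall_notMem.mpr fun m hm => h2 m hm
        rw [this, Nat.sInf_empty]
  have h2' : MeasurableSet {ω | ∀ m < v, ¬ P m ω} := by
    have : {ω | ∀ m < v, ¬ P m ω} = ⋂ m, ⋂ _ : m < v, {ω | P m ω}ᶜ := by
      ext ω; simp
    rw [this]
    exact MeasurableSet.iInter fun m => MeasurableSet.iInter fun _ => (h m).compl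
  have h3' : MeasurableSet {ω | ∀ m, ¬ P m ω} := by
    have : {ω | ∀ m, ¬ P m ω} = ⋂ m, {ω | P m ω}ᶜ := by
      ext ω; simp
    rw [this]
    exact MeasurableSet.iInter fun m => (h m).compl
  rw [heq, Set.setOf_or, Set.setOf_and, Set.setOf_and]
  apply MeasurableSet.union ((h v).inter h2')
  rcases eq_or_ne v 0 with hv | hv
  · have : {ω : Ω | v = 0} = Set.univ := by ext ω; simp [hv]
    rw [this, Set.univ_inter]
    exact h3'
  · have : {ω : Ω | v = 0} = ∅ := by ext ω; simp [hv]
    rw [this, Set.empty_inter]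
    exact MeasurableSet.empty

lemma measurable_greedyTime (X : ℕ → Ω → β) (hX : ∀ j, Measurable (X j)) (k : ℕ) :
    Measurable (greedyTime X k) := by
  apply measurable_sInfSet
  intro m
  exact (measurable_imageCard X hX m) (measurableSet_singleton k)

lemma measurable_occCount (X : ℕ → Ω → β) (hX : ∀ j, Measurable (X j)) (i : β) (k : ℕ) :
    Measurable (occCount X i k) := by
  have hF : ∀ v : ℕ, Measurable fun ω =>
      ((Finset.range v).filter fun j => X j ω = i).card := by
    intro v
    have : (fun ω => ((Finset.range v).filter fun j => X j ω = i).card)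
        = fun ω => ∑ j ∈ Finset.range v, if X j ω = i then 1 else 0 := by
      funext ω
      exact Finset.card_filter _ _
    rw [this]
    exact Finset.measurable_sum _ fun j _ =>
      Measurable.ite ((hX j) (measurableSet_singleton i)) measurable_const measurable_const
  apply measurable_to_countable'
  intro a
  have : occCount X i k ⁻¹' {a} = ⋃ v, greedyTime X k ⁻¹' {v}
      ∩ (fun ω => ((Finset.range v).filter fun j => X j ω = i).card) ⁻¹' {a} := by
    ext ω
    simp only [Set.mem_preimage, Set.mem_singleton_iff, Set.mem_iUnion, Set.mem_inter_iff]
    constructor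
    · intro h; exact ⟨greedyTime X k ω, rfl, h⟩
    · rintro ⟨v, h1, h2⟩
      rw [occCount, h1]; exact h2
  rw [this]
  exact MeasurableSet.iUnion fun v =>
    ((measurable_greedyTime X hX k) (measurableSet_singleton v)).inter
      ((hF v) (measurableSet_singleton a))

lemma greedyTime_eq_of_distinct {X : ℕ → Ω → β} {k : ℕ} {ω : Ω}
    (hd : ∀ j' < k, ∀ j < j', X j ω ≠ X j' ω) : greedyTime X k ω = k := by
  have hmem : ((Finset.range k).image fun j => X j ω).card = k := by
    rw [Finset.card_image_of_injOn, Finset.card_range]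
    intro a ha b hb hab
    simp only [Finset.coe_range, Set.mem_Iio] at ha hb
    by_contra hne
    rcases lt_or_gt_of_ne hne with h | h
    · exact hd b hb a h hab
    · exact hd a ha b h hab.symm
  refine le_antisymm (Nat.sInf_le hmem) ?_
  have h1 := Nat.sInf_mem (⟨k, hmem⟩ :
    {m | ((Finset.range m).image fun j => X j ω).card = k}.Nonempty)
  calc k = ((Finset.range (greedyTime X k ω)).image fun j => X j ω).card := h1.symm
    _ ≤ (Finset.range (greedyTime X k ω)).card := Finset.card_image_le
    _ = greedyTime X k ω := Finset.card_range _

lemma occCount_eq_zero {X : ℕ → Ω → β} {i : β} {k : ℕ} {ω : Ω}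
    (h : ∀ j < greedyTime X k ω, X j ω ≠ i) : occCount X i k ω = 0 := by
  rw [occCount, Finset.card_eq_zero, Finset.filter_eq_empty_iff]
  intro j hj
  exact h j (Finset.mem_range.mp hj)

lemma occCount_le {X : ℕ → Ω → β} {i : β} {k : ℕ} {ω : Ω} :
    occCount X i k ω ≤ greedyTime X k ω :=
  le_trans (Finset.card_filter_le _ _) (le_of_eq (Finset.card_range _))

end helpers
section part2

variable {Ω β : Type*} [MeasurableSpace Ω] [MeasurableSpace β] [MeasurableSingletonClass β]
  [Countable β] [DecidableEq β]

lemma fiber_sum (μ : Measure Ω) [IsProbabilityMeasure μ] {f : Ω → β} (hf : Measurable f) :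
    ∑' a : β, μ (f ⁻¹' {a}) = 1 := by
  rw [← measure_iUnion (fun a b hab => Set.disjoint_left.mpr fun ω h1 h2 =>
      hab ((Set.mem_preimage.mp h1).symm.trans (Set.mem_preimage.mp h2)))
    (fun a => hf (measurableSet_singleton a))]
  have : ⋃ a, f ⁻¹' {a} = Set.univ := by
    ext ω; simp
  rw [this, measure_univ]

lemma collision_le (μ : Measure Ω) [IsProbabilityMeasure μ]
    (X : ℕ → Ω → β) (hX : ∀ j, Measurable (X j))
    (hind : iIndepFun X μ)
    {s : ℝ} (hfib : ∀ j a, μ (X j ⁻¹' {a}) ≤ ENNReal.ofReal s)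
    {j j' : ℕ} (hjj : j ≠ j') :
    μ {ω | X j ω = X j' ω} ≤ ENNReal.ofReal s := by
  have hsub : {ω | X j ω = X j' ω} = ⋃ a, X j ⁻¹' {a} ∩ X j' ⁻¹' {a} := by
    ext ω
    simp only [Set.mem_setOf_eq, Set.mem_iUnion, Set.mem_inter_iff, Set.mem_preimage,
      Set.mem_singleton_iff]
    exact ⟨fun h => ⟨X j' ω, h, rfl⟩, fun ⟨a, h1, h2⟩ => h1.trans h2.symm⟩
  rw [hsub]
  calc μ (⋃ a, X j ⁻¹' {a} ∩ X j' ⁻¹' {a})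
      ≤ ∑' a, μ (X j ⁻¹' {a} ∩ X j' ⁻¹' {a}) := measure_iUnion_le _
    _ = ∑' a, μ (X j ⁻¹' {a}) * μ (X j' ⁻¹' {a}) := by
        refine tsum_congr fun a => ?_
        exact (hind.indepFun hjj).measure_inter_preimage_eq_mul
          {a} {a} (measurableSet_singleton a) (measurableSet_singleton a)
    _ ≤ ∑' a, ENNReal.ofReal s * μ (X j' ⁻¹' {a}) :=
        ENNReal.tsum_le_tsum fun a => mul_le_mul_left (hfib j a) _
    _ = ENNReal.ofReal s * ∑' a, μ (X j' ⁻¹' {a}) := ENNReal.tsum_mul_left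
    _ = ENNReal.ofReal s := by rw [fiber_sum μ (hX j'), mul_one]

end part2

section part3

variable {Ω β : Type*} [MeasurableSpace Ω] [MeasurableSpace β] [MeasurableSingletonClass β]
  [Countable β] [DecidableEq β]

lemma voting_power_le (μ : Measure Ω) [IsProbabilityMeasure μ]
    (X : ℕ → Ω → β) (hX : ∀ j, Measurable (X j))
    (hind : iIndepFun X μ)
    (k : ℕ) (i : β) (T : Set β) (hT : MeasurableSet T) (hiT : i ∈ T)
    {s : ℝ} (hs : 0 ≤ s)
    (hfib : ∀ j a, μ (X j ⁻¹' {a}) ≤ ENNReal.ofReal s)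
    (hTb : ∀ j, μ (X j ⁻¹' T) ≤ ENNReal.ofReal s) :
    ∫ ω, (occCount X i k ω : ℝ) / (greedyTime X k ω : ℝ) ∂μ
      ≤ ((k : ℝ) * k + k) * s := by
  set G : Set Ω := (⋃ j' ∈ Finset.range k, ⋃ j ∈ Finset.range j', {ω | X j ω = X j' ω})
      ∪ ⋃ j ∈ Finset.range k, X j ⁻¹' T with hG_def
  have hGmeas : MeasurableSet G := by
    apply MeasurableSet.union
    · exact MeasurableSet.biUnion (Finset.range k).countable_toSet fun j' _ =>
        MeasurableSet.biUnion (Finset.range j').countable_toSet fun j _ =>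
          measSet_eq (hX j) (hX j')
    · exact MeasurableSet.biUnion (Finset.range k).countable_toSet fun j _ => (hX j) hT
  -- pointwise bound by the indicator of G
  have hpt : ∀ ω, (occCount X i k ω : ℝ) / (greedyTime X k ω : ℝ)
      ≤ G.indicator (fun _ => (1 : ℝ)) ω := by
    intro ω
    by_cases hω : ω ∈ G
    · rw [Set.indicator_of_mem hω]
      rcases Nat.eq_zero_or_pos (greedyTime X k ω) with hv | hv
      · have : occCount X i k ω = 0 := Nat.le_zero.mp (le_trans occCount_le (le_of_eq hv))
        simp [this]
      · have h1 : (occCount X i k ω : ℝ) ≤ (greedyTime X k ω : ℝ) :=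
          Nat.cast_le.mpr occCount_le
        have h2 : (0 : ℝ) ≤ (greedyTime X k ω : ℝ) := Nat.cast_nonneg _
        exact div_le_one_of_le₀ h1 h2
    · rw [Set.indicator_of_notMem hω]
      simp only [hG_def, Set.mem_union, Set.mem_iUnion, Finset.mem_range, Set.mem_setOf_eq,
        Set.mem_preimage, not_or, not_exists] at hω
      obtain ⟨hω1, hω2⟩ := hω
      have hd : ∀ j' < k, ∀ j < j', X j ω ≠ X j' ω := by
        intro j' hj' j hj heq
        exact (hω1 j') hj' j hj heq
      have hg := greedyTime_eq_of_distinct hd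
      have hocc : occCount X i k ω = 0 := by
        apply occCount_eq_zero
        intro j hj heq
        rw [hg] at hj
        exact (hω2 j) hj (heq ▸ hiT)
      simp [hocc]
  -- integrability
  have hmeas_f : Measurable fun ω => (occCount X i k ω : ℝ) / (greedyTime X k ω : ℝ) :=
    (measurable_from_nat.comp (measurable_occCount X hX i k)).div
      (measurable_from_nat.comp (measurable_greedyTime X hX k))
  have hnonneg_f : ∀ ω, 0 ≤ (occCount X i k ω : ℝ) / (greedyTime X k ω : ℝ) :=
    fun ω => div_nonneg (Nat.cast_nonneg _) (Nat.cast_nonneg _)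
  have hint_f : Integrable (fun ω => (occCount X i k ω : ℝ) / (greedyTime X k ω : ℝ)) μ := by
    refine ⟨hmeas_f.aestronglyMeasurable, HasFiniteIntegral.of_bounded (C := 1) ?_⟩
    refine Filter.Eventually.of_forall fun ω => ?_
    rw [Real.norm_eq_abs, abs_of_nonneg (hnonneg_f ω)]
    calc (occCount X i k ω : ℝ) / (greedyTime X k ω : ℝ)
        ≤ G.indicator (fun _ => (1 : ℝ)) ω := hpt ω
      _ ≤ 1 := by by_cases h : ω ∈ G <;> simp [h]
  have hint_ind : Integrable (G.indicator fun _ => (1 : ℝ)) μ :=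
    (integrable_const (1 : ℝ)).indicator hGmeas
  -- integral bound via the indicator
  have hIle : ∫ ω, (occCount X i k ω : ℝ) / (greedyTime X k ω : ℝ) ∂μ ≤ (μ G).toReal := by
    calc ∫ ω, (occCount X i k ω : ℝ) / (greedyTime X k ω : ℝ) ∂μ
        ≤ ∫ ω, G.indicator (fun _ => (1 : ℝ)) ω ∂μ := integral_mono hint_f hint_ind hpt
      _ = (μ G).toReal := by
          rw [MeasureTheory.integral_indicator_const (1 : ℝ) hGmeas, smul_eq_mul, mul_one, measureReal_def]
  -- measure bound
  have hμG : μ G ≤ ENNReal.ofReal (((k : ℝ) * k + k) * s) := by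
    have hcol : μ (⋃ j' ∈ Finset.range k, ⋃ j ∈ Finset.range j', {ω | X j ω = X j' ω})
        ≤ (k : ℝ≥0∞) * ((k : ℝ≥0∞) * ENNReal.ofReal s) := by
      calc μ (⋃ j' ∈ Finset.range k, ⋃ j ∈ Finset.range j', {ω | X j ω = X j' ω})
          ≤ ∑ j' ∈ Finset.range k, μ (⋃ j ∈ Finset.range j', {ω | X j ω = X j' ω}) :=
            measure_biUnion_finset_le _ _
        _ ≤ ∑ j' ∈ Finset.range k, (k : ℝ≥0∞) * ENNReal.ofReal s := by
            refine Finset.sum_le_sum fun j' hj' => ?_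
            calc μ (⋃ j ∈ Finset.range j', {ω | X j ω = X j' ω})
                ≤ ∑ j ∈ Finset.range j', μ {ω | X j ω = X j' ω} :=
                  measure_biUnion_finset_le _ _
              _ ≤ ∑ j ∈ Finset.range j', ENNReal.ofReal s := by
                  refine Finset.sum_le_sum fun j hj => ?_
                  exact collision_le μ X hX hind hfib (Finset.mem_range.mp hj).ne
              _ = (j' : ℝ≥0∞) * ENNReal.ofReal s := by
                  rw [Finset.sum_const, Finset.card_range, nsmul_eq_mul]
              _ ≤ (k : ℝ≥0∞) * ENNReal.ofReal s := by
                  gcongr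
                  exact_mod_cast (Finset.mem_range.mp hj').le
        _ = (k : ℝ≥0∞) * ((k : ℝ≥0∞) * ENNReal.ofReal s) := by
            rw [Finset.sum_const, Finset.card_range, nsmul_eq_mul]
    have hTpart : μ (⋃ j ∈ Finset.range k, X j ⁻¹' T) ≤ (k : ℝ≥0∞) * ENNReal.ofReal s := by
      calc μ (⋃ j ∈ Finset.range k, X j ⁻¹' T)
          ≤ ∑ j ∈ Finset.range k, μ (X j ⁻¹' T) := measure_biUnion_finset_le _ _
        _ ≤ ∑ j ∈ Finset.range k, ENNReal.ofReal s := Finset.sum_le_sum fun j _ => hTb j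
        _ = (k : ℝ≥0∞) * ENNReal.ofReal s := by
            rw [Finset.sum_const, Finset.card_range, nsmul_eq_mul]
    calc μ G ≤ (k : ℝ≥0∞) * ((k : ℝ≥0∞) * ENNReal.ofReal s) + (k : ℝ≥0∞) * ENNReal.ofReal s :=
          le_trans (measure_union_le _ _) (add_le_add hcol hTpart)
      _ = ENNReal.ofReal (((k : ℝ) * k + k) * s) := by
          rw [ENNReal.ofReal_mul (by positivity), ENNReal.ofReal_add (by positivity)
            (Nat.cast_nonneg k), ENNReal.ofReal_mul (Nat.cast_nonneg k)]
          simp only [ENNReal.ofReal_natCast]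
          ring
  exact hIle.trans (ENNReal.toReal_le_of_le_ofReal
    (mul_nonneg (by positivity) hs) hμG)

end part3

/-- Asymptotic fairness of the voting scheme `(id, 1)` with greedy sampling:
if the weights converge uniformly to `0`, then for every node `i` and every sequence of
`r`-splittings of `i` (with converging split weights), the difference between the total
voting power of the split nodes and the voting power of the original node tends to `0`.
The split distribution lives on `ℕ ⊕ Fin r`: node `u ≠ i` keeps its weight `p n u`
(as `Sum.inl u`), node `i` is replaced by the `r` nodes `Sum.inr j` of weights `q n j`. -/
theorem asymptotic_fairness
    (k r i : ℕ) (hk : 1 ≤ k) (hr : 1 ≤ r)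
    -- the sequence of weight distributions
    (p : ℕ → ℕ → ℝ)
    (hp_nonneg : ∀ n u, 0 ≤ p n u) (hp_sum : ∀ n, HasSum (p n) 1)
    (hp_sup : Filter.Tendsto (fun n => ⨆ u, p n u) Filter.atTop (nhds 0))
    -- the sequence of r-splittings of node i, with converging split weights
    (q : ℕ → Fin r → ℝ) (qlim : Fin r → ℝ)
    (hq_pos : ∀ n j, 0 < q n j) (hq_sum : ∀ n, ∑ j, q n j = p n i)
    (hq_lim : ∀ j, Filter.Tendsto (fun n => q n j) Filter.atTop (nhds (qlim j)))
    -- i.i.d. samples from the original distributions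
    (Ω : ℕ → Type*) [∀ n, MeasurableSpace (Ω n)]
    (μ : ∀ n, Measure (Ω n)) [∀ n, IsProbabilityMeasure (μ n)]
    (X : ∀ n, ℕ → Ω n → ℕ)
    (hXmeas : ∀ n j, Measurable (X n j))
    (hXindep : ∀ n, iIndepFun (X n) (μ n))
    (hXdist : ∀ n j u, μ n (X n j ⁻¹' {u}) = ENNReal.ofReal (p n u))
    -- i.i.d. samples from the split distributions
    (Ω' : ℕ → Type*) [∀ n, MeasurableSpace (Ω' n)]
    (μ' : ∀ n, Measure (Ω' n)) [∀ n, IsProbabilityMeasure (μ' n)]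
    (Y : ∀ n, ℕ → Ω' n → ℕ ⊕ Fin r)
    (hYmeas : ∀ n j, Measurable (Y n j))
    (hYindep : ∀ n, iIndepFun (Y n) (μ' n))
    (hYdist : ∀ n j a, μ' n (Y n j ⁻¹' {a}) =
      ENNReal.ofReal (Sum.elim (fun u => if u = i then 0 else p n u) (q n) a)) :
    Filter.Tendsto
      (fun n =>
        |(∑ j : Fin r,
            ∫ ω, (occCount (Y n) (Sum.inr j) k ω : ℝ) / (greedyTime (Y n) k ω : ℝ) ∂μ' n)
          - ∫ ω, (occCount (X n) i k ω : ℝ) / (greedyTime (X n) k ω : ℝ) ∂μ n|)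
      Filter.atTop (nhds 0) := by
  -- notation for the uniform bound on the weights
  set s : ℕ → ℝ := fun n => ⨆ u, p n u with hs_def
  have hple : ∀ n u, p n u ≤ s n := by
    intro n u
    apply le_ciSup (f := p n) ⟨1, ?_⟩ u
    rintro x ⟨u', rfl⟩
    exact le_hasSum (hp_sum n) u' fun j _ => hp_nonneg n j
  have hs0 : ∀ n, 0 ≤ s n := fun n => (hp_nonneg n 0).trans (hple n 0)
  have hqle : ∀ n j, q n j ≤ p n i := by
    intro n j
    rw [← hq_sum n]
    exact Finset.single_le_sum (fun j' _ => (hq_pos n j').le) (Finset.mem_univ j)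
  set C : ℝ := (k : ℝ) * k + k with hC_def
  have hC0 : 0 ≤ C := by positivity
  -- the two voting powers
  set A : ℕ → ℝ := fun n => ∑ j : Fin r,
      ∫ ω, (occCount (Y n) (Sum.inr j) k ω : ℝ) / (greedyTime (Y n) k ω : ℝ) ∂μ' n with hA_def
  set B : ℕ → ℝ := fun n =>
      ∫ ω, (occCount (X n) i k ω : ℝ) / (greedyTime (X n) k ω : ℝ) ∂μ n with hB_def
  -- bound on the original voting power
  have hB_le : ∀ n, B n ≤ C * s n := by
    intro n
    apply voting_power_le (μ n) (X n) (hXmeas n) (hXindep n) k i {i}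
      (measurableSet_singleton i) rfl (hs0 n)
    · intro j a
      rw [hXdist n j a]
      exact ENNReal.ofReal_le_ofReal (hple n a)
    · intro j
      rw [hXdist n j i]
      exact ENNReal.ofReal_le_ofReal (hple n i)
  have hB_nonneg : ∀ n, 0 ≤ B n := fun n =>
    integral_nonneg fun ω => div_nonneg (Nat.cast_nonneg _) (Nat.cast_nonneg _)
  -- bound on each split voting power
  have hY_le : ∀ n (j0 : Fin r),
      ∫ ω, (occCount (Y n) (Sum.inr j0) k ω : ℝ) / (greedyTime (Y n) k ω : ℝ) ∂μ' n
        ≤ C * s n := by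
    intro n j0
    apply voting_power_le (μ' n) (Y n) (hYmeas n) (hYindep n) k (Sum.inr j0)
      (Set.range Sum.inr) measurableSet_range_inr ⟨j0, rfl⟩ (hs0 n)
    · intro j a
      rw [hYdist n j a]
      apply ENNReal.ofReal_le_ofReal
      rcases a with u | j1
      · simp only [Sum.elim_inl]
        split
        · exact hs0 n
        · exact hple n u
      · simp only [Sum.elim_inr]
        exact (hqle n j1).trans (hple n i)
    · intro j
      have : Y n j ⁻¹' Set.range Sum.inr = ⋃ j1 : Fin r, Y n j ⁻¹' {Sum.inr j1} := by
        ext ω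
        simp only [Set.mem_preimage, Set.mem_range, Set.mem_iUnion, Set.mem_singleton_iff]
        exact ⟨fun ⟨y, hy⟩ => ⟨y, hy.symm⟩, fun ⟨y, hy⟩ => ⟨y, hy.symm⟩⟩
      rw [this]
      calc μ' n (⋃ j1 : Fin r, Y n j ⁻¹' {Sum.inr j1})
          ≤ ∑' j1 : Fin r, μ' n (Y n j ⁻¹' {Sum.inr j1}) := measure_iUnion_le _
        _ = ∑ j1 : Fin r, μ' n (Y n j ⁻¹' {Sum.inr j1}) := tsum_fintype _
        _ = ∑ j1 : Fin r, ENNReal.ofReal (q n j1) := by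
            refine Finset.sum_congr rfl fun j1 _ => ?_
            rw [hYdist n j (Sum.inr j1)]
            rfl
        _ = ENNReal.ofReal (∑ j1 : Fin r, q n j1) :=
            (ENNReal.ofReal_sum_of_nonneg fun j1 _ => (hq_pos n j1).le).symm
        _ ≤ ENNReal.ofReal (s n) := by
            rw [hq_sum n]
            exact ENNReal.ofReal_le_ofReal (hple n i)
  have hY_nonneg : ∀ n (j0 : Fin r),
      0 ≤ ∫ ω, (occCount (Y n) (Sum.inr j0) k ω : ℝ) / (greedyTime (Y n) k ω : ℝ) ∂μ' n :=
    fun n j0 => integral_nonneg fun ω => div_nonneg (Nat.cast_nonneg _) (Nat.cast_nonneg _)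
  have hA_nonneg : ∀ n, 0 ≤ A n := fun n => Finset.sum_nonneg fun j0 _ => hY_nonneg n j0
  have hA_le : ∀ n, A n ≤ (r : ℝ) * (C * s n) := by
    intro n
    calc A n ≤ ∑ _j0 : Fin r, C * s n := Finset.sum_le_sum fun j0 _ => hY_le n j0
      _ = (r : ℝ) * (C * s n) := by
          rw [Finset.sum_const, Finset.card_univ, Fintype.card_fin, nsmul_eq_mul]
  -- squeeze
  have hlim : Filter.Tendsto (fun n => ((r : ℝ) + 1) * (C * s n)) Filter.atTop (nhds 0) := by
    have := hp_sup.const_mul (((r : ℝ) + 1) * C)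
    rw [mul_zero] at this
    convert this using 2 with n
    rw [hs_def]
    ring
  apply squeeze_zero (fun n => abs_nonneg _) (fun n => ?_) hlim
  calc |A n - B n| ≤ |A n| + |B n| := abs_sub _ _
    _ = A n + B n := by rw [abs_of_nonneg (hA_nonneg n), abs_of_nonneg (hB_nonneg n)]
    _ ≤ (r : ℝ) * (C * s n) + C * s n := add_le_add (hA_le n) (hB_le n)
    _ = ((r : ℝ) + 1) * (C * s n) := by ring
end
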